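/- arXiv:1511.04489 — 8 statements merged into one kernel-verified Lean document; each statement's English description precedes it below -/
import Mathlib

section
/- Let I ⊆ (0,∞) be an interval and let r : I → ℝ be twice differentiable and positive, K_r : I → ℝ differentiable, and K_l : I → ℝ, and let Q be a real constant. Assume the electrovacuum constraint equations hold on I: K_r(K_r + 2K_l) − (r'² + 2 r r'' − 1)/r² = Q²/r⁴ and K_r' + (r'/r)(K_r − K_l) = 0. Then, with f = r'² − (K_r r)², the identity r² · (f·r)' = (r² − Q²) · r' holds at every point of I. -/
open Set Filter Topology

/-!
The momentum constraint gives `K_r' r = −r' (K_r − K_l)`, which turns the derivative of `f r`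
into `r' (r'² + 2 r r'' − K_r (K_r + 2 K_l) r²)`; by the Hamiltonian constraint the bracket equals
`1 − Q²/r²`.
-/

theorem HasDerivWithinAt.sq_sub_sq_mul_mul {s : Set ℝ} {l : ℝ} {r r' Kr : ℝ → ℝ}
    {dr dr' dKr : ℝ} (hr : HasDerivWithinAt r dr s l) (hr' : HasDerivWithinAt r' dr' s l)
    (hKr : HasDerivWithinAt Kr dKr s l) :
    HasDerivWithinAt (fun x => ((r' x) ^ 2 - (Kr x * r x) ^ 2) * r x)
      (dr * ((r' l) ^ 2 - 3 * (Kr l * r l) ^ 2) + 2 * r l * r' l * dr'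
        - 2 * Kr l * dKr * (r l) ^ 3) s l := by
  refine (((hr'.pow 2).sub ((hKr.mul hr).pow 2)).mul hr).congr_deriv ?_
  simp only [Pi.mul_apply, Pi.sub_apply, Pi.pow_apply]
  ring

theorem momentum_constraint_mul_radius {r r' Kr Kr' Kl : ℝ} (hr : r ≠ 0)
    (hmom : Kr' + (r' / r) * (Kr - Kl) = 0) :
    Kr' * r = -r' * (Kr - Kl) := by
  field_simp at hmom
  linear_combination hmom

theorem hamiltonian_constraint_mul_sq_radius {r r' r'' Kr Kl Q : ℝ} (hr : r ≠ 0)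
    (hham : Kr * (Kr + 2 * Kl) - (r' ^ 2 + 2 * r * r'' - 1) / r ^ 2 = Q ^ 2 / r ^ 4) :
    r ^ 2 * (Kr * (Kr + 2 * Kl) * r ^ 2 - (r' ^ 2 + 2 * r * r'' - 1)) = Q ^ 2 := by
  field_simp at hham
  linear_combination hham

theorem electrovacuum_sq_mul_deriv_eq {r r' r'' Kr Kr' Kl Q : ℝ} (hr : r ≠ 0)
    (hham : Kr * (Kr + 2 * Kl) - (r' ^ 2 + 2 * r * r'' - 1) / r ^ 2 = Q ^ 2 / r ^ 4)
    (hmom : Kr' + (r' / r) * (Kr - Kl) = 0) :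
    r ^ 2 * (r' * (r' ^ 2 - 3 * (Kr * r) ^ 2) + 2 * r * r' * r'' - 2 * Kr * Kr' * r ^ 3)
      = (r ^ 2 - Q ^ 2) * r' := by
  linear_combination (-2 * Kr * r ^ 4) * momentum_constraint_mul_radius hr hmom
    - r' * hamiltonian_constraint_mul_sq_radius hr hham

theorem electrovacuum_constraints_imply_fr_identity_general
    (I : Set ℝ)
    (Q : ℝ) (r r' r'' Kr Kr' Kl : ℝ → ℝ)
    (hrpos : ∀ l ∈ I, 0 < r l)
    (hr' : ∀ l ∈ I, HasDerivWithinAt r (r' l) I l)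
    (hr'' : ∀ l ∈ I, HasDerivWithinAt r' (r'' l) I l)
    (hKr' : ∀ l ∈ I, HasDerivWithinAt Kr (Kr' l) I l)
    (hham : ∀ l ∈ I, Kr l * (Kr l + 2 * Kl l)
      - ((r' l) ^ 2 + 2 * r l * r'' l - 1) / (r l) ^ 2 = Q ^ 2 / (r l) ^ 4)
    (hmom : ∀ l ∈ I, Kr' l + (r' l / r l) * (Kr l - Kl l) = 0) :
    ∀ l ∈ I, ∃ D : ℝ,
      HasDerivWithinAt (fun x => ((r' x) ^ 2 - (Kr x * r x) ^ 2) * r x) D I l ∧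
      (r l) ^ 2 * D = ((r l) ^ 2 - Q ^ 2) * r' l := by
  intro l hl
  exact ⟨_, (hr' l hl).sq_sub_sq_mul_mul (hr'' l hl) (hKr' l hl),
    electrovacuum_sq_mul_deriv_eq (hrpos l hl).ne' (hham l hl) (hmom l hl)⟩

/-- On an interval `I ⊆ (0,∞)`, the electrovacuum constraint
equations imply the identity `r² · (f·r)' = (r² − Q²) · r'`, where
`f = r'² − (K_r r)²`. -/
theorem electrovacuum_constraints_imply_fr_identity
    (I : Set ℝ) (hI : I ⊆ Ioi (0 : ℝ)) (hIconn : I.OrdConnected)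
    (Q : ℝ) (r r' r'' Kr Kr' Kl : ℝ → ℝ)
    (hrpos : ∀ l ∈ I, 0 < r l)
    (hr' : ∀ l ∈ I, HasDerivWithinAt r (r' l) I l)
    (hr'' : ∀ l ∈ I, HasDerivWithinAt r' (r'' l) I l)
    (hKr' : ∀ l ∈ I, HasDerivWithinAt Kr (Kr' l) I l)
    (hham : ∀ l ∈ I, Kr l * (Kr l + 2 * Kl l)
      - ((r' l) ^ 2 + 2 * r l * r'' l - 1) / (r l) ^ 2 = Q ^ 2 / (r l) ^ 4)
    (hmom : ∀ l ∈ I, Kr' l + (r' l / r l) * (Kr l - Kl l) = 0) :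
    ∀ l ∈ I, ∃ D : ℝ,
      HasDerivWithinAt (fun x => ((r' x) ^ 2 - (Kr x * r x) ^ 2) * r x) D I l ∧
      (r l) ^ 2 * D = ((r l) ^ 2 - Q ^ 2) * r' l :=
  electrovacuum_constraints_imply_fr_identity_general I Q r r' r'' Kr Kr' Kl hrpos hr' hr'' hKr'
    hham hmom
end

section
/- Let I ⊆ (0,∞) be an interval and let r : I → ℝ be twice differentiable and positive, K_r : I → ℝ differentiable, and K_l : I → ℝ, and let Q be a real constant. Assume the electrovacuum constraint equations hold on I: K_r(K_r + 2K_l) − (r'² + 2 r r'' − 1)/r² = Q²/r⁴ and K_r' + (r'/r)(K_r − K_l) = 0. Then there exists a real constant C such that f(l) = 1 − 2C/r(l) + Q²/r(l)² for every l ∈ I, where f = r'² − (K_r r)². (This is the Birkhoff-type characterization of the electrovacuum exterior region by the two Reissner–Nordström parameters C and Q.) -/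
open Set Filter Topology

/-!
The mass function `m = (r/2)(1 - f) + Q²/(2r)`, i.e. the Misner–Sharp mass corrected by the
electrostatic energy of the charge, is defined so that `f = 1 - 2m/r + Q²/r²` holds identically.
Its derivative is a combination of the two constraint residuals, `r'r²/2` times the Hamiltonian one
plus `K_r r³` times the momentum one, so on the connected set `I` it is a constant `C`.
-/

theorem Convex.exists_forall_eq_of_hasDerivWithinAt_zero {𝕜 G : Type*} [RCLike 𝕜]
    [NormedAddCommGroup G] [NormedSpace 𝕜 G] {f : 𝕜 → G} {s : Set 𝕜} (hs : Convex ℝ s)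
    (hf : ∀ x ∈ s, HasDerivWithinAt f 0 s x) : ∃ c, ∀ x ∈ s, f x = c := by
  rcases s.eq_empty_or_nonempty with rfl | ⟨x₀, hx₀⟩
  · exact ⟨0, by simp⟩
  refine ⟨f x₀, fun x hx => ?_⟩
  simpa [sub_eq_zero] using
    hs.norm_image_sub_le_of_norm_hasDerivWithin_le hf (C := 0) (by simp) hx₀ hx

noncomputable section

namespace Electrovacuum

variable (Q : ℝ) (r r' r'' Kr Kr' Kl : ℝ → ℝ) (l : ℝ)

def hamiltonianConstraint : ℝ :=
  Kr l * (Kr l + 2 * Kl l) - (r' l ^ 2 + 2 * r l * r'' l - 1) / r l ^ 2 - Q ^ 2 / r l ^ 4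

def momentumConstraint : ℝ :=
  Kr' l + r' l / r l * (Kr l - Kl l)

def chargedMass : ℝ :=
  r l / 2 * (1 - (r' l ^ 2 - (Kr l * r l) ^ 2)) + Q ^ 2 / (2 * r l)

variable {Q r r' r'' Kr Kr' l}

theorem sq_sub_sq_eq_of_chargedMass (hr : r l ≠ 0) :
    r' l ^ 2 - (Kr l * r l) ^ 2 = 1 - 2 * chargedMass Q r r' Kr l / r l + Q ^ 2 / r l ^ 2 := by
  unfold chargedMass
  field_simp
  ring

theorem hasDerivWithinAt_chargedMass {s : Set ℝ} (hr : HasDerivWithinAt r (r' l) s l)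
    (hr' : HasDerivWithinAt r' (r'' l) s l) (hKr : HasDerivWithinAt Kr (Kr' l) s l)
    (hr0 : r l ≠ 0) :
    HasDerivWithinAt (chargedMass Q r r' Kr)
      (r' l * r l ^ 2 / 2 * hamiltonianConstraint Q r r' r'' Kr Kl l
        + Kr l * r l ^ 3 * momentumConstraint r r' Kr Kr' Kl l) s l := by
  have h := ((hr.div_const 2).mul
      ((hasDerivWithinAt_const l s 1).sub ((hr'.pow 2).sub ((hKr.mul hr).pow 2)))).add
    ((hasDerivWithinAt_const l s (Q ^ 2)).div (hr.const_mul 2) (mul_ne_zero two_ne_zero hr0))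
  refine h.congr_deriv ?_
  unfold hamiltonianConstraint momentumConstraint
  simp only [Pi.mul_apply, Pi.sub_apply, Pi.pow_apply]
  field_simp
  ring

end Electrovacuum

end

open Electrovacuum in
theorem electrovacuum_exterior_is_reissner_nordstrom_general
    (I : Set ℝ) (hIconn : I.OrdConnected)
    (Q : ℝ) (r r' r'' Kr Kr' Kl : ℝ → ℝ)
    (hrpos : ∀ l ∈ I, 0 < r l)
    (hr' : ∀ l ∈ I, HasDerivWithinAt r (r' l) I l)
    (hr'' : ∀ l ∈ I, HasDerivWithinAt r' (r'' l) I l)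
    (hKr' : ∀ l ∈ I, HasDerivWithinAt Kr (Kr' l) I l)
    (hham : ∀ l ∈ I, Kr l * (Kr l + 2 * Kl l)
      - ((r' l) ^ 2 + 2 * r l * r'' l - 1) / (r l) ^ 2 = Q ^ 2 / (r l) ^ 4)
    (hmom : ∀ l ∈ I, Kr' l + (r' l / r l) * (Kr l - Kl l) = 0) :
    ∃ C : ℝ, ∀ l ∈ I,
      (r' l) ^ 2 - (Kr l * r l) ^ 2 = 1 - 2 * C / r l + Q ^ 2 / (r l) ^ 2 := by
  have hmass : ∀ l ∈ I, HasDerivWithinAt (chargedMass Q r r' Kr) 0 I l := fun l hl => by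
    have hH : hamiltonianConstraint Q r r' r'' Kr Kl l = 0 := sub_eq_zero.mpr (hham l hl)
    have hM : momentumConstraint r r' Kr Kr' Kl l = 0 := hmom l hl
    simpa [hH, hM] using
      hasDerivWithinAt_chargedMass (Q := Q) (Kl := Kl) (hr' l hl) (hr'' l hl) (hKr' l hl) (hrpos l hl).ne'
  obtain ⟨C, hC⟩ := hIconn.convex.exists_forall_eq_of_hasDerivWithinAt_zero hmass
  exact ⟨C, fun l hl => hC l hl ▸ sq_sub_sq_eq_of_chargedMass (hrpos l hl).ne'⟩

/-- Birkhoff-type theorem: On an interval `I ⊆ (0,∞)`, the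
electrovacuum constraint equations imply that
`f = r'² − (K_r r)² = 1 − 2C/r + Q²/r²` for some constant `C`. -/
theorem electrovacuum_exterior_is_reissner_nordstrom
    (I : Set ℝ) (hI : I ⊆ Ioi (0 : ℝ)) (hIconn : I.OrdConnected)
    (Q : ℝ) (r r' r'' Kr Kr' Kl : ℝ → ℝ)
    (hrpos : ∀ l ∈ I, 0 < r l)
    (hr' : ∀ l ∈ I, HasDerivWithinAt r (r' l) I l)
    (hr'' : ∀ l ∈ I, HasDerivWithinAt r' (r'' l) I l)
    (hKr' : ∀ l ∈ I, HasDerivWithinAt Kr (Kr' l) I l)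
    (hham : ∀ l ∈ I, Kr l * (Kr l + 2 * Kl l)
      - ((r' l) ^ 2 + 2 * r l * r'' l - 1) / (r l) ^ 2 = Q ^ 2 / (r l) ^ 4)
    (hmom : ∀ l ∈ I, Kr' l + (r' l / r l) * (Kr l - Kl l) = 0) :
    ∃ C : ℝ, ∀ l ∈ I,
      (r' l) ^ 2 - (Kr l * r l) ^ 2 = 1 - 2 * C / r l + Q ^ 2 / (r l) ^ 2 :=
  electrovacuum_exterior_is_reissner_nordstrom_general I hIconn Q r r' r'' Kr Kr' Kl hrpos hr' hr''
    hKr' hham hmom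
end

section
/- Let l₀ > 0 and let r : [l₀,∞) → ℝ be twice differentiable and positive, K_r : [l₀,∞) → ℝ differentiable, K_l : [l₀,∞) → ℝ, and Q a real constant, such that the electrovacuum constraint equations K_r(K_r + 2K_l) − (r'² + 2 r r'' − 1)/r² = Q²/r⁴ and K_r' + (r'/r)(K_r − K_l) = 0 hold on [l₀,∞). Assume the asymptotic flatness conditions lim_{l→∞} r(l) = ∞, lim_{l→∞} r'(l) = 1 and lim_{l→∞} r(l)K_r(l) = 0. Then there exists a real constant M (the ADM mass) such that the Misner–Sharp energy satisfies 𝓔(l) = M − Q²/(2 r(l)) for every l ≥ l₀, and lim_{l→∞} 𝓔(l) = M. -/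
open Set Filter Topology

/-!
The charge-corrected Misner–Sharp energy `𝓔 + Q²/(2r)` is conserved. Differentiating
`𝓔 = (r/2)(1 - r'² + (K_r r)²)` and eliminating `r r''` with the Hamiltonian constraint gives
`𝓔' = Q² r'/(2r²) + K_r r³ (K_r' + (r'/r)(K_r - K_l))`, and the last bracket vanishes by the
momentum constraint, so `𝓔' = -(Q²/(2r))'`. Hence `𝓔 + Q²/(2r)` is a constant `M` on the
exterior region, and `𝓔 = M - Q²/(2r) → M` because `r → ∞`.
-/

theorem Convex.eqOn_of_hasDerivWithinAt_zero {E : Type*} [NormedAddCommGroup E]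
    [NormedSpace ℝ E] {f : ℝ → E} {s : Set ℝ} (hs : Convex ℝ s)
    (hf : ∀ x ∈ s, HasDerivWithinAt f 0 s x) {x y : ℝ} (hx : x ∈ s) (hy : y ∈ s) :
    f y = f x := by
  have h := hs.norm_image_sub_le_of_norm_hasDerivWithin_le hf (fun _ _ => norm_zero.le) hx hy
  rwa [zero_mul, norm_le_zero_iff, sub_eq_zero] at h

noncomputable def misnerSharpEnergy (r r' Kr : ℝ → ℝ) (l : ℝ) : ℝ :=
  r l / 2 * (1 - ((r' l) ^ 2 - (Kr l * r l) ^ 2))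

theorem hasDerivWithinAt_misnerSharpEnergy {r r' Kr : ℝ → ℝ} {r'' Kr' : ℝ} {s : Set ℝ}
    {l : ℝ} (hr : HasDerivWithinAt r (r' l) s l) (hr' : HasDerivWithinAt r' r'' s l)
    (hKr : HasDerivWithinAt Kr Kr' s l) :
    HasDerivWithinAt (misnerSharpEnergy r r' Kr)
      (r' l / 2 * (1 - ((r' l) ^ 2 - (Kr l * r l) ^ 2))
        - r l * (r' l * r'' - Kr l * r l * (Kr' * r l + Kr l * r' l))) s l := by
  have hf := (hasDerivWithinAt_const l s 1).sub ((hr'.pow 2).sub ((hKr.mul hr).pow 2))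
  refine ((hr.div_const 2).mul hf).congr_deriv ?_
  simp only [Pi.sub_apply, Pi.pow_apply, Pi.mul_apply]
  push_cast
  ring

theorem misnerSharpEnergy_deriv_eq_of_electrovacuum_constraints
    {r r' r'' Kr Kr' Kl Q : ℝ} (hr : r ≠ 0)
    (hham : Kr * (Kr + 2 * Kl) - (r' ^ 2 + 2 * r * r'' - 1) / r ^ 2 = Q ^ 2 / r ^ 4)
    (hmom : Kr' + (r' / r) * (Kr - Kl) = 0) :
    r' / 2 * (1 - (r' ^ 2 - (Kr * r) ^ 2)) - r * (r' * r'' - Kr * r * (Kr' * r + Kr * r'))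
      = Q ^ 2 * r' / (2 * r ^ 2) := by
  have hham' : Kr * (Kr + 2 * Kl) * r ^ 2 - (r' ^ 2 + 2 * r * r'' - 1) = Q ^ 2 / r ^ 2 := by
    field_simp at hham ⊢
    linear_combination hham
  have hmom' : Kr' * r + r' * (Kr - Kl) = 0 := by
    field_simp at hmom
    linear_combination hmom
  linear_combination (r' / 2) * hham' + (Kr * r ^ 2) * hmom'

theorem hasDerivWithinAt_misnerSharpEnergy_add_charge_of_electrovacuum
    {r r' Kr : ℝ → ℝ} {r'' Kr' Kl Q : ℝ} {s : Set ℝ} {l : ℝ} (hr0 : r l ≠ 0)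
    (hr : HasDerivWithinAt r (r' l) s l) (hr' : HasDerivWithinAt r' r'' s l)
    (hKr : HasDerivWithinAt Kr Kr' s l)
    (hham : Kr l * (Kr l + 2 * Kl) - ((r' l) ^ 2 + 2 * r l * r'' - 1) / (r l) ^ 2
      = Q ^ 2 / (r l) ^ 4)
    (hmom : Kr' + (r' l / r l) * (Kr l - Kl) = 0) :
    HasDerivWithinAt (fun x => misnerSharpEnergy r r' Kr x + Q ^ 2 / (2 * r x)) 0 s l := by
  have hcharge := (hasDerivWithinAt_const l s (Q ^ 2)).div (hr.const_mul 2) (by positivity)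
  refine ((hasDerivWithinAt_misnerSharpEnergy hr hr' hKr).add hcharge).congr_deriv ?_
  rw [misnerSharpEnergy_deriv_eq_of_electrovacuum_constraints hr0 hham hmom]
  field_simp
  ring

theorem misner_sharp_energy_of_electrovacuum_exterior_general
    (l₀ : ℝ) (Q : ℝ) (r r' r'' Kr Kr' Kl : ℝ → ℝ)
    (hrpos : ∀ l ∈ Ici l₀, 0 < r l)
    (hr' : ∀ l ∈ Ici l₀, HasDerivWithinAt r (r' l) (Ici l₀) l)
    (hr'' : ∀ l ∈ Ici l₀, HasDerivWithinAt r' (r'' l) (Ici l₀) l)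
    (hKr' : ∀ l ∈ Ici l₀, HasDerivWithinAt Kr (Kr' l) (Ici l₀) l)
    (hham : ∀ l ∈ Ici l₀, Kr l * (Kr l + 2 * Kl l)
      - ((r' l) ^ 2 + 2 * r l * r'' l - 1) / (r l) ^ 2 = Q ^ 2 / (r l) ^ 4)
    (hmom : ∀ l ∈ Ici l₀, Kr' l + (r' l / r l) * (Kr l - Kl l) = 0)
    (hrlim : Tendsto r atTop atTop) :
    ∃ M : ℝ,
      (∀ l ∈ Ici l₀,
        r l / 2 * (1 - ((r' l) ^ 2 - (Kr l * r l) ^ 2)) = M - Q ^ 2 / (2 * r l)) ∧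
      Tendsto (fun l => r l / 2 * (1 - ((r' l) ^ 2 - (Kr l * r l) ^ 2)))
        atTop (𝓝 M) := by
  set M := misnerSharpEnergy r r' Kr l₀ + Q ^ 2 / (2 * r l₀)
  have hconserved : ∀ l ∈ Ici l₀, misnerSharpEnergy r r' Kr l = M - Q ^ 2 / (2 * r l) :=
    fun l hl => eq_sub_of_add_eq <| (convex_Ici l₀).eqOn_of_hasDerivWithinAt_zero
      (fun x hx => hasDerivWithinAt_misnerSharpEnergy_add_charge_of_electrovacuum
        (hrpos x hx).ne' (hr' x hx) (hr'' x hx) (hKr' x hx) (hham x hx) (hmom x hx))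
      self_mem_Ici hl
  refine ⟨M, hconserved, ?_⟩
  have hcharge : Tendsto (fun l => Q ^ 2 / (2 * r l)) atTop (𝓝 0) :=
    tendsto_const_nhds.div_atTop (hrlim.const_mul_atTop two_pos)
  refine Tendsto.congr' ?_ (by simpa using tendsto_const_nhds (x := M) |>.sub hcharge)
  filter_upwards [eventually_ge_atTop l₀] with l hl
  exact (hconserved l hl).symm

/-- For an asymptotically flat electrovacuum exterior region
`[l₀,∞)` there exists a constant `M` (the ADM mass) such that the
Misner–Sharp energy `𝓔 = (r/2)(1 − f)` satisfies `𝓔 = M − Q²/(2r)` on the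
whole exterior region, and `𝓔 → M` at infinity. -/
theorem misner_sharp_energy_of_electrovacuum_exterior
    (l₀ : ℝ) (hl₀ : 0 < l₀) (Q : ℝ) (r r' r'' Kr Kr' Kl : ℝ → ℝ)
    (hrpos : ∀ l ∈ Ici l₀, 0 < r l)
    (hr' : ∀ l ∈ Ici l₀, HasDerivWithinAt r (r' l) (Ici l₀) l)
    (hr'' : ∀ l ∈ Ici l₀, HasDerivWithinAt r' (r'' l) (Ici l₀) l)
    (hKr' : ∀ l ∈ Ici l₀, HasDerivWithinAt Kr (Kr' l) (Ici l₀) l)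
    (hham : ∀ l ∈ Ici l₀, Kr l * (Kr l + 2 * Kl l)
      - ((r' l) ^ 2 + 2 * r l * r'' l - 1) / (r l) ^ 2 = Q ^ 2 / (r l) ^ 4)
    (hmom : ∀ l ∈ Ici l₀, Kr' l + (r' l / r l) * (Kr l - Kl l) = 0)
    (hrlim : Tendsto r atTop atTop)
    (hr'lim : Tendsto r' atTop (𝓝 1))
    (hrKrlim : Tendsto (fun l => r l * Kr l) atTop (𝓝 0)) :
    ∃ M : ℝ,
      (∀ l ∈ Ici l₀,
        r l / 2 * (1 - ((r' l) ^ 2 - (Kr l * r l) ^ 2)) = M - Q ^ 2 / (2 * r l)) ∧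
      Tendsto (fun l => r l / 2 * (1 - ((r' l) ^ 2 - (Kr l * r l) ^ 2)))
        atTop (𝓝 M) :=
  misner_sharp_energy_of_electrovacuum_exterior_general l₀ Q r r' r'' Kr Kr' Kl hrpos hr' hr'' hKr'
    hham hmom hrlim
end

section
/- Let I ⊆ (0,∞) be an interval and let r : I → ℝ be twice differentiable and positive, K_r : I → ℝ differentiable, and K_l, μ, j : I → ℝ, satisfying the Hamiltonian constraint K_r(K_r + 2K_l) − (r'² + 2 r r'' − 1)/r² = 8π μ and the momentum constraint K_r' + (r'/r)(K_r − K_l) = 4π j on I. Then the Misner–Sharp energy 𝓔 = (r/2)(1 − r'² + (K_r r)²) is differentiable on I and its derivative satisfies 𝓔' = 4π r² ( μ r' + j r K_r ) at every point of I. -/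
/-!
Differentiating `𝓔 = (r/2)(1 - r'² + (K_r r)²)` gives
`𝓔' = (r'/2)(1 - r'² + K_r² r²) - r r' r'' + K_r K_r' r³ + K_r² r² r'`.
Multiplying the Hamiltonian constraint by `r²` and the momentum constraint by `r` expresses
`8π μ r²` and `4π j r` polynomially, and `(8π μ r²) r'/2 + (4π j r) r² K_r` reproduces `𝓔'`:
the `K_l` terms of the two constraints cancel.
-/

open Set Real

theorem hasDerivWithinAt_misnerSharp {r r' Kr : ℝ → ℝ} {dr dr' dKr : ℝ} {s : Set ℝ} {l : ℝ}
    (hr : HasDerivWithinAt r dr s l) (hr' : HasDerivWithinAt r' dr' s l)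
    (hKr : HasDerivWithinAt Kr dKr s l) :
    HasDerivWithinAt (fun x => r x / 2 * (1 - r' x ^ 2 + (Kr x * r x) ^ 2))
      (dr / 2 * (1 - r' l ^ 2 + (Kr l * r l) ^ 2)
        + r l * (Kr l * r l * (dKr * r l + Kr l * dr) - r' l * dr')) s l := by
  refine ((hr.div_const 2).fun_mul
    (((hr'.fun_pow 2).const_sub 1).fun_add ((hKr.fun_mul hr).fun_pow 2))).congr_deriv ?_
  norm_num
  ring

section Constraints

variable {r r' r'' Kr Kr' Kl μ j : ℝ}

theorem hamiltonian_constraint_mul_sq (hr : r ≠ 0)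
    (h : Kr * (Kr + 2 * Kl) - (r' ^ 2 + 2 * r * r'' - 1) / r ^ 2 = 8 * π * μ) :
    8 * π * μ * r ^ 2 = Kr * (Kr + 2 * Kl) * r ^ 2 - (r' ^ 2 + 2 * r * r'' - 1) := by
  rw [← h]
  field_simp

theorem momentum_constraint_mul (hr : r ≠ 0) (h : Kr' + r' / r * (Kr - Kl) = 4 * π * j) :
    4 * π * j * r = Kr' * r + r' * (Kr - Kl) := by
  rw [← h]
  field_simp

theorem misnerSharp_deriv_eq_of_constraints (hr : r ≠ 0)
    (hham : Kr * (Kr + 2 * Kl) - (r' ^ 2 + 2 * r * r'' - 1) / r ^ 2 = 8 * π * μ)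
    (hmom : Kr' + r' / r * (Kr - Kl) = 4 * π * j) :
    r' / 2 * (1 - r' ^ 2 + (Kr * r) ^ 2) + r * (Kr * r * (Kr' * r + Kr * r') - r' * r'')
      = 4 * π * r ^ 2 * (μ * r' + j * r * Kr) :=
  calc _ = (8 * π * μ * r ^ 2) * r' / 2 + (4 * π * j * r) * (r ^ 2 * Kr) := by
        rw [hamiltonian_constraint_mul_sq hr hham, momentum_constraint_mul hr hmom]; ring
    _ = _ := by ring

end Constraints

theorem misner_sharp_energy_derivative_general
    (I : Set ℝ)
    (r r' r'' Kr Kr' Kl μ j : ℝ → ℝ)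
    (hrpos : ∀ l ∈ I, 0 < r l)
    (hr' : ∀ l ∈ I, HasDerivWithinAt r (r' l) I l)
    (hr'' : ∀ l ∈ I, HasDerivWithinAt r' (r'' l) I l)
    (hKr' : ∀ l ∈ I, HasDerivWithinAt Kr (Kr' l) I l)
    (hham : ∀ l ∈ I, Kr l * (Kr l + 2 * Kl l)
      - ((r' l) ^ 2 + 2 * r l * r'' l - 1) / (r l) ^ 2 = 8 * Real.pi * μ l)
    (hmom : ∀ l ∈ I, Kr' l + (r' l / r l) * (Kr l - Kl l) = 4 * Real.pi * j l) :
    ∀ l ∈ I, HasDerivWithinAt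
      (fun x => r x / 2 * (1 - (r' x) ^ 2 + (Kr x * r x) ^ 2))
      (4 * Real.pi * (r l) ^ 2 * (μ l * r' l + j l * r l * Kr l)) I l := by
  intro l hl
  rw [← misnerSharp_deriv_eq_of_constraints (hrpos l hl).ne' (hham l hl) (hmom l hl)]
  exact hasDerivWithinAt_misnerSharp (hr' l hl) (hr'' l hl) (hKr' l hl)

/-- On an interval `I ⊆ (0,∞)`, the Hamiltonian and momentum
constraints imply that the Misner–Sharp energy
`𝓔 = (r/2)(1 − r'² + (K_r r)²)` is differentiable with
`𝓔' = 4π r² (μ r' + j r K_r)`. -/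
theorem misner_sharp_energy_derivative
    (I : Set ℝ) (hI : I ⊆ Ioi (0 : ℝ)) (hIconn : I.OrdConnected)
    (r r' r'' Kr Kr' Kl μ j : ℝ → ℝ)
    (hrpos : ∀ l ∈ I, 0 < r l)
    (hr' : ∀ l ∈ I, HasDerivWithinAt r (r' l) I l)
    (hr'' : ∀ l ∈ I, HasDerivWithinAt r' (r'' l) I l)
    (hKr' : ∀ l ∈ I, HasDerivWithinAt Kr (Kr' l) I l)
    (hham : ∀ l ∈ I, Kr l * (Kr l + 2 * Kl l)
      - ((r' l) ^ 2 + 2 * r l * r'' l - 1) / (r l) ^ 2 = 8 * Real.pi * μ l)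
    (hmom : ∀ l ∈ I, Kr' l + (r' l / r l) * (Kr l - Kl l) = 4 * Real.pi * j l) :
    ∀ l ∈ I, HasDerivWithinAt
      (fun x => r x / 2 * (1 - (r' x) ^ 2 + (Kr x * r x) ^ 2))
      (4 * Real.pi * (r l) ^ 2 * (μ l * r' l + j l * r l * Kr l)) I l :=
  misner_sharp_energy_derivative_general I r r' r'' Kr Kr' Kl μ j hrpos hr' hr'' hKr' hham hmom
end

section
/- (Main theorem, part (i): size–charge inequality for bodies.) Let l₀ > 0 and Q ≠ 0 a real constant. Let r : [0,∞) → ℝ be twice differentiable with r(0) = 0, continuous first derivative, r'(0) = 1 and r(l) > 0 for all l > 0; let K_r : [0,∞) → ℝ be differentiable and continuous at 0, and K_l, μ, j : (0,∞) → ℝ, such that the Hamiltonian constraint K_r(K_r + 2K_l) − (r'² + 2 r r'' − 1)/r² = 8π μ and the momentum constraint K_r' + (r'/r)(K_r − K_l) = 4π j hold on (0,∞). Assume: (1) the dominant energy condition μ ≥ |j| on (0,l₀] (the ball 𝓑); (2) electrovacuum exterior: μ = Q²/(8π r⁴) and j = 0 on [l₀,∞); (3) asymptotic flatness: lim_{l→∞}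 r(l) = ∞, lim_{l→∞} r'(l) = 1, lim_{l→∞} r(l)K_r(l) = 0; (4) the exterior region is untrapped: f(l) = r'(l)² − (K_r(l) r(l))² > 0 for all l ≥ l₀. Then the areal radius 𝓡 = r(l₀) of the ball satisfies the strict inequality 2𝓡 > |Q|. -/
/-!
The Misner–Sharp mass `m = r (1 - f) / 2` obeys `m' = 4π r² (μ r' + j K_r r)` by the constraints.
Where the data are untrapped and `r' > 0`, i.e. `|K_r r| < r'`, the dominant energy condition makes
`m` nondecreasing. Starting from `m(0) = 0`, the last point of `[0, l₀]` where `m ≥ 0` can therefore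
not lie before `l₀` (beyond it `m < 0` forces `f > 0`, and `r' → 1` forces `r' > 0`), so
`m(l₀) ≥ 0`. In the electrovacuum exterior `M = m + Q² / (2r)` is constant, hence
`r² f = r² - 2 M r + Q²` there. If `2 r(l₀) ≤ |Q|`, then `M ≥ Q² / (2 r(l₀)) ≥ |Q| ≥ r(l₀)`, and
since `r → ∞` the exterior contains a sphere of areal radius `M`, on which `r² f = Q² - M² ≤ 0`:
a trapped sphere.
-/

open Set Filter Topology Real

/-- The function `f` of the paper, the squared spacetime norm of `∇r`. -/
def gradRadiusSq (r r' Kr : ℝ → ℝ) (l : ℝ) : ℝ :=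
  r' l ^ 2 - (Kr l * r l) ^ 2

noncomputable def misnerSharpMass (r r' Kr : ℝ → ℝ) (l : ℝ) : ℝ :=
  r l / 2 * (1 - gradRadiusSq r r' Kr l)

theorem pos_of_ne_zero_of_tendsto {g : ℝ → ℝ} {a c : ℝ} (hg : ContinuousOn g (Ioi a))
    (hne : ∀ x ∈ Ioi a, g x ≠ 0) (hc : 0 < c) (hlim : Tendsto g atTop (𝓝 c)) :
    ∀ x ∈ Ioi a, 0 < g x := by
  intro x hx
  by_contra! hgx
  obtain ⟨y, hy, hy0⟩ := isPreconnected_Ioi.intermediate_value_Ico hx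
    (le_principal_iff.mpr (Ioi_mem_atTop a)) hg hlim ⟨hgx, hc⟩
  exact hne y hy hy0

theorem mul_add_mul_nonneg_of_abs_le {μ j a b : ℝ} (hj : |j| ≤ μ) (hb : |b| ≤ a) :
    0 ≤ μ * a + j * b := by
  have hjb : |j * b| ≤ μ * a :=
    abs_mul j b ▸ mul_le_mul hj hb (abs_nonneg b) ((abs_nonneg j).trans hj)
  linarith [neg_abs_le (j * b)]

section MisnerSharpMass

variable {r r' Kr μ j : ℝ → ℝ}

theorem sq_mul_gradRadiusSq (l : ℝ) :
    r l ^ 2 * gradRadiusSq r r' Kr l = r l ^ 2 - 2 * r l * misnerSharpMass r r' Kr l := by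
  unfold misnerSharpMass
  ring

theorem sq_mul_gradRadiusSq_of_add_charge_eq {l M Q : ℝ} (hr : r l ≠ 0)
    (hM : misnerSharpMass r r' Kr l + Q ^ 2 / (2 * r l) = M) :
    r l ^ 2 * gradRadiusSq r r' Kr l = r l ^ 2 - 2 * M * r l + Q ^ 2 := by
  rw [sq_mul_gradRadiusSq, ← hM]
  field_simp
  ring

theorem gradRadiusSq_pos_of_misnerSharpMass_neg {l : ℝ} (hr : 0 < r l)
    (hm : misnerSharpMass r r' Kr l < 0) : 0 < gradRadiusSq r r' Kr l := by
  unfold misnerSharpMass at hm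
  nlinarith

theorem continuousOn_misnerSharpMass {s : Set ℝ} (hr : ContinuousOn r s)
    (hr' : ContinuousOn r' s) (hKr : ContinuousOn Kr s) :
    ContinuousOn (misnerSharpMass r r' Kr) s :=
  (hr.div_const 2).mul (continuousOn_const.sub ((hr'.pow 2).sub ((hKr.mul hr).pow 2)))

theorem hasDerivAt_misnerSharpMass {l r'' Kr' Kl μ j : ℝ}
    (hr : HasDerivAt r (r' l) l) (hr' : HasDerivAt r' r'' l) (hKr : HasDerivAt Kr Kr' l)
    (hrl : r l ≠ 0)
    (hham : Kr l * (Kr l + 2 * Kl) - (r' l ^ 2 + 2 * r l * r'' - 1) / r l ^ 2 = 8 * π * μ)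
    (hmom : Kr' + r' l / r l * (Kr l - Kl) = 4 * π * j) :
    HasDerivAt (misnerSharpMass r r' Kr) (4 * π * r l ^ 2 * (μ * r' l + j * (Kr l * r l))) l := by
  refine ((hr.div_const 2).mul ((hasDerivAt_const l 1).sub
    ((hr'.pow 2).sub ((hKr.mul hr).pow 2)))).congr_deriv ?_
  field_simp at hham hmom
  simp only [Pi.mul_apply, Pi.sub_apply, Pi.pow_apply]
  linear_combination r' l / 2 * hham + Kr l * r l ^ 2 * hmom

theorem monotoneOn_misnerSharpMass {a b : ℝ}
    (hm : ContinuousOn (misnerSharpMass r r' Kr) (Icc a b))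
    (hm' : ∀ x ∈ Ioo a b, HasDerivAt (misnerSharpMass r r' Kr)
      (4 * π * r x ^ 2 * (μ x * r' x + j x * (Kr x * r x))) x)
    (hdec : ∀ x ∈ Ioo a b, |j x| ≤ μ x) (hr' : ∀ x ∈ Ioo a b, 0 < r' x)
    (hf : ∀ x ∈ Ioo a b, 0 < gradRadiusSq r r' Kr x) :
    MonotoneOn (misnerSharpMass r r' Kr) (Icc a b) := by
  rw [← interior_Icc] at hm' hdec hr' hf
  refine monotoneOn_of_hasDerivWithinAt_nonneg (convex_Icc a b) hm
    (fun x hx => (hm' x hx).hasDerivWithinAt) fun x hx => ?_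
  have hKr : |Kr x * r x| ≤ r' x :=
    (abs_lt_of_sq_lt_sq (sub_pos.mp (hf x hx)) (hr' x hx).le).le
  have := mul_add_mul_nonneg_of_abs_le (hdec x hx) hKr
  positivity

theorem misnerSharpMass_nonneg {l₀ : ℝ} (hl₀ : 0 ≤ l₀) (hr0 : r 0 = 0)
    (hrpos : ∀ x ∈ Ioi 0, 0 < r x) (hr'c : ContinuousOn r' (Ici 0))
    (hr'lim : Tendsto r' atTop (𝓝 1)) (hm : ContinuousOn (misnerSharpMass r r' Kr) (Ici 0))
    (hm' : ∀ x ∈ Ioi 0, HasDerivAt (misnerSharpMass r r' Kr)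
      (4 * π * r x ^ 2 * (μ x * r' x + j x * (Kr x * r x))) x)
    (hdec : ∀ x ∈ Ioc 0 l₀, |j x| ≤ μ x) (hext : ∀ x ∈ Ici l₀, 0 < gradRadiusSq r r' Kr x) :
    0 ≤ misnerSharpMass r r' Kr l₀ := by
  set m := misnerSharpMass r r' Kr
  have hclosed : IsClosed ({x | 0 ≤ m x} ∩ Icc 0 l₀) := by
    rw [inter_comm]
    exact (hm.mono Icc_subset_Ici_self).preimage_isClosed_of_isClosed isClosed_Icc isClosed_Ici
  refine hclosed.mem_of_ge_of_forall_exists_gt (by simp [m, misnerSharpMass, hr0]) hl₀ ?_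
  rintro c ⟨hmc, hc0, hcl₀⟩
  by_contra hempty
  have hneg : ∀ x ∈ Ioc c l₀, m x < 0 := fun x hx => not_le.mp fun h => hempty ⟨x, h, hx⟩
  have hf : ∀ x ∈ Ioi c, 0 < gradRadiusSq r r' Kr x := by
    intro x hx
    rcases le_or_gt x l₀ with hxl₀ | hxl₀
    · exact gradRadiusSq_pos_of_misnerSharpMass_neg (hrpos x (hc0.trans_lt hx)) (hneg x ⟨hx, hxl₀⟩)
    · exact hext x hxl₀.le
  have hr' : ∀ x ∈ Ioi c, 0 < r' x := by
    refine pos_of_ne_zero_of_tendsto (hr'c.mono fun x hx => hc0.trans hx.le) (fun x hx h0 => ?_)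
      one_pos hr'lim
    have := hf x hx
    rw [gradRadiusSq, h0] at this
    nlinarith [sq_nonneg (Kr x * r x)]
  have hmono : MonotoneOn m (Icc c l₀) :=
    monotoneOn_misnerSharpMass (hm.mono fun x hx => hc0.trans hx.1)
      (fun x hx => hm' x (hc0.trans_lt hx.1)) (fun x hx => hdec x ⟨hc0.trans_lt hx.1, hx.2.le⟩)
      (fun x hx => hr' x hx.1) (fun x hx => hf x hx.1)
  exact hempty ⟨l₀, hmc.trans (hmono ⟨le_rfl, hcl₀.le⟩ ⟨hcl₀.le, le_rfl⟩ hcl₀.le), hcl₀, le_rfl⟩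

theorem misnerSharpMass_add_charge_eq {l₀ Q : ℝ} (hr : ∀ x ∈ Ici l₀, HasDerivAt r (r' x) x)
    (hrpos : ∀ x ∈ Ici l₀, 0 < r x)
    (hm' : ∀ x ∈ Ici l₀, HasDerivAt (misnerSharpMass r r' Kr)
      (4 * π * r x ^ 2 * (μ x * r' x + j x * (Kr x * r x))) x)
    (hμ : ∀ x ∈ Ici l₀, μ x = Q ^ 2 / (8 * π * r x ^ 4)) (hj : ∀ x ∈ Ici l₀, j x = 0) :
    ∀ l ∈ Ici l₀, misnerSharpMass r r' Kr l + Q ^ 2 / (2 * r l) =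
      misnerSharpMass r r' Kr l₀ + Q ^ 2 / (2 * r l₀) := by
  set F := fun x => misnerSharpMass r r' Kr x + Q ^ 2 / (2 * r x)
  have hF : ∀ x ∈ Ici l₀, HasDerivAt F 0 x := by
    intro x hx
    have hrx := hrpos x hx
    refine ((hm' x hx).add ((hasDerivAt_const x (Q ^ 2)).div ((hr x hx).const_mul 2)
      (by positivity))).congr_deriv ?_
    rw [hμ x hx, hj x hx]
    field_simp
    ring
  intro l hl
  exact constant_of_has_deriv_right_zero (fun x hx => (hF x hx.1).continuousAt.continuousWithinAt)
    (fun x hx => (hF x hx.1).hasDerivWithinAt) l ⟨hl, le_rfl⟩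

theorem lt_abs_of_untrapped_reissnerNordstrom {l₀ M Q : ℝ} (hr : ContinuousOn r (Ici l₀))
    (hrlim : Tendsto r atTop atTop) (hf : ∀ l ∈ Ici l₀, 0 < r l ^ 2 - 2 * M * r l + Q ^ 2)
    (hM : r l₀ ≤ M) : M < |Q| := by
  obtain ⟨l, hl, hlM⟩ := intermediate_value_Ici hr hrlim hM
  have hfl := hf l hl
  rw [hlM] at hfl
  exact (le_abs_self M).trans_lt (sq_lt_sq.mp (by linarith))

end MisnerSharpMass

theorem size_charge_inequality_for_bodies_general
    (l₀ : ℝ) (hl₀ : 0 < l₀) (Q : ℝ)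
    (r r' r'' Kr Kr' Kl μ j : ℝ → ℝ)
    (hr0 : r 0 = 0)
    (hrpos : ∀ l ∈ Ioi (0 : ℝ), 0 < r l)
    (hr' : ∀ l ∈ Ici (0 : ℝ), HasDerivWithinAt r (r' l) (Ici 0) l)
    (hr'cont : ContinuousOn r' (Ici 0))
    (hr'' : ∀ l ∈ Ioi (0 : ℝ), HasDerivWithinAt r' (r'' l) (Ici 0) l)
    (hKr' : ∀ l ∈ Ioi (0 : ℝ), HasDerivWithinAt Kr (Kr' l) (Ici 0) l)
    (hKrcont0 : ContinuousWithinAt Kr (Ici 0) 0)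
    (hham : ∀ l ∈ Ioi (0 : ℝ), Kr l * (Kr l + 2 * Kl l)
      - ((r' l) ^ 2 + 2 * r l * r'' l - 1) / (r l) ^ 2 = 8 * Real.pi * μ l)
    (hmom : ∀ l ∈ Ioi (0 : ℝ),
      Kr' l + (r' l / r l) * (Kr l - Kl l) = 4 * Real.pi * j l)
    (hDEC : ∀ l ∈ Ioc 0 l₀, |j l| ≤ μ l)
    (hEVμ : ∀ l ∈ Ici l₀, μ l = Q ^ 2 / (8 * Real.pi * (r l) ^ 4))
    (hEVj : ∀ l ∈ Ici l₀, j l = 0)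
    (hrlim : Tendsto r atTop atTop)
    (hr'lim : Tendsto r' atTop (𝓝 1))
    (huntrapped : ∀ l ∈ Ici l₀, 0 < (r' l) ^ 2 - (Kr l * r l) ^ 2) :
    2 * r l₀ > |Q| := by
  have hext : Ici l₀ ⊆ Ioi 0 := fun l hl => hl₀.trans_le hl
  have hrc : ContinuousOn r (Ici 0) := fun l hl => (hr' l hl).continuousWithinAt
  have hKrc : ContinuousOn Kr (Ici 0) := fun l hl => (eq_or_lt_of_le (mem_Ici.mp hl)).elim
    (fun h => h ▸ hKrcont0) fun h => (hKr' l h).continuousWithinAt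
  have hrd : ∀ l ∈ Ioi (0 : ℝ), HasDerivAt r (r' l) l := fun l hl =>
    (hr' l (mem_Ici.mpr hl.le)).hasDerivAt (Ici_mem_nhds hl)
  have hm' : ∀ l ∈ Ioi (0 : ℝ), HasDerivAt (misnerSharpMass r r' Kr)
      (4 * π * r l ^ 2 * (μ l * r' l + j l * (Kr l * r l))) l := fun l hl =>
    hasDerivAt_misnerSharpMass (hrd l hl) ((hr'' l hl).hasDerivAt (Ici_mem_nhds hl))
      ((hKr' l hl).hasDerivAt (Ici_mem_nhds hl)) (hrpos l hl).ne' (hham l hl) (hmom l hl)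
  have hm₀ : 0 ≤ misnerSharpMass r r' Kr l₀ := misnerSharpMass_nonneg hl₀.le hr0 hrpos hr'cont
    hr'lim (continuousOn_misnerSharpMass hrc hr'cont hKrc) hm' hDEC huntrapped
  have hmass := misnerSharpMass_add_charge_eq (fun x hx => hrd x (hext hx))
    (fun x hx => hrpos x (hext hx)) (fun x hx => hm' x (hext hx)) hEVμ hEVj
  set M := misnerSharpMass r r' Kr l₀ + Q ^ 2 / (2 * r l₀)
  have hRN : ∀ l ∈ Ici l₀, 0 < r l ^ 2 - 2 * M * r l + Q ^ 2 := fun l hl => by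
    have hrl := hrpos l (hext hl)
    rw [← sq_mul_gradRadiusSq_of_add_charge_eq hrl.ne' (hmass l hl)]
    exact mul_pos (pow_pos hrl 2) (huntrapped l hl)
  by_contra! hsmall
  have hR := hrpos l₀ hl₀
  have hQM : |Q| ≤ M := by
    have : |Q| ≤ Q ^ 2 / (2 * r l₀) := by
      rw [le_div_iff₀ (by positivity), ← sq_abs, sq]
      exact mul_le_mul_of_nonneg_left hsmall (abs_nonneg Q)
    linarith
  exact (lt_abs_of_untrapped_reissnerNordstrom (hrc.mono (Ici_subset_Ici.mpr hl₀.le)) hrlim hRN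
    (by linarith)).not_ge hQM

/-- Main theorem, part (i): for regular spherically symmetric,
asymptotically flat initial data whose exterior region `[l₀,∞)` is
electrovacuum with total charge `Q ≠ 0` and untrapped, and whose ball
`(0,l₀]` satisfies the dominant energy condition, the areal radius
`𝓡 = r(l₀)` of the ball satisfies the strict inequality `2𝓡 > |Q|`. -/
theorem size_charge_inequality_for_bodies
    (l₀ : ℝ) (hl₀ : 0 < l₀) (Q : ℝ) (hQ : Q ≠ 0)
    (r r' r'' Kr Kr' Kl μ j : ℝ → ℝ)
    (hr0 : r 0 = 0) (hr'0 : r' 0 = 1)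
    (hrpos : ∀ l ∈ Ioi (0 : ℝ), 0 < r l)
    (hr' : ∀ l ∈ Ici (0 : ℝ), HasDerivWithinAt r (r' l) (Ici 0) l)
    (hr'cont : ContinuousOn r' (Ici 0))
    (hr'' : ∀ l ∈ Ioi (0 : ℝ), HasDerivWithinAt r' (r'' l) (Ici 0) l)
    (hKr' : ∀ l ∈ Ioi (0 : ℝ), HasDerivWithinAt Kr (Kr' l) (Ici 0) l)
    (hKrcont0 : ContinuousWithinAt Kr (Ici 0) 0)
    (hham : ∀ l ∈ Ioi (0 : ℝ), Kr l * (Kr l + 2 * Kl l)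
      - ((r' l) ^ 2 + 2 * r l * r'' l - 1) / (r l) ^ 2 = 8 * Real.pi * μ l)
    (hmom : ∀ l ∈ Ioi (0 : ℝ),
      Kr' l + (r' l / r l) * (Kr l - Kl l) = 4 * Real.pi * j l)
    (hDEC : ∀ l ∈ Ioc 0 l₀, |j l| ≤ μ l)
    (hEVμ : ∀ l ∈ Ici l₀, μ l = Q ^ 2 / (8 * Real.pi * (r l) ^ 4))
    (hEVj : ∀ l ∈ Ici l₀, j l = 0)
    (hrlim : Tendsto r atTop atTop)
    (hr'lim : Tendsto r' atTop (𝓝 1))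
    (hrKrlim : Tendsto (fun l => r l * Kr l) atTop (𝓝 0))
    (huntrapped : ∀ l ∈ Ici l₀, 0 < (r' l) ^ 2 - (Kr l * r l) ^ 2) :
    2 * r l₀ > |Q| :=
  size_charge_inequality_for_bodies_general l₀ hl₀ Q r r' r'' Kr Kr' Kl μ j hr0 hrpos hr' hr'cont
    hr'' hKr' hKrcont0 hham hmom hDEC hEVμ hEVj hrlim hr'lim huntrapped
end

section
/- (Main theorem, part (ii): size–charge inequality for the horizon.) Let l₀ > 0 and Q ≠ 0 a real constant. Let r : [l₀,∞) → ℝ be twice differentiable and positive, K_r : [l₀,∞) → ℝ differentiable, K_l : [l₀,∞) → ℝ, satisfying the electrovacuum constraints K_r(K_r + 2K_l) − (r'² + 2 r r'' − 1)/r² = Q²/r⁴ and K_r' + (r'/r)(K_r − K_l) = 0 on [l₀,∞), with asymptotic flatness lim_{l→∞} r(l) = ∞, lim_{l→∞} r'(l) = 1, lim_{l→∞} r(l)K_r(l) = 0, and assume f and r' are continuous. Let M = lim_{l→∞} 𝓔(l) be the ADM mass. If the set H = { l ≥ l₀ : f(l) = 0 } is nonempty, then M ≥ |Q|, H has a greatest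 element l₁ (the horizon), the horizon radius satisfies 𝓡₀ = r(l₁) = M + √(M² − Q²), f(l) > 0 for all l > l₁, and 𝓡₀ ≥ |Q|, with equality if and only if M = |Q| (the extreme Reissner–Nordström case). -/
open Set Filter Topology

/-!
The constraints say exactly that `𝓔 + Q²/(2r)` has vanishing derivative, so it equals its value
`M` at infinity and `f r² = r² - 2Mr + Q² = (r - R₊)(r - R₋)` with `R± = M ± √(M² - Q²)`.
A zero of `f` is a positive root of this quadratic, which forces `M ≥ |Q|`. Since `r → ∞`, `f` is
positive far out, so the zero set of `f` is compact and has a largest point `l₁`; `r(l₁)` is one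
of the roots, and it cannot be `R₋ < R₊` because by continuity `r` would later reach `R₊`, where
`f` vanishes again. Likewise `f`, positive at infinity and without zeros beyond `l₁`, stays
positive there.
-/

section Quadratic

variable {M Q : ℝ}

theorem abs_le_of_sq_sub_two_mul_add_sq_eq_zero {x : ℝ} (hx : 0 < x)
    (h : x ^ 2 - 2 * M * x + Q ^ 2 = 0) : |Q| ≤ M := by
  nlinarith [sq_nonneg (x - |Q|), sq_abs Q]

theorem sq_sub_two_mul_add_sq_eq_mul (h : |Q| ≤ M) (x : ℝ) :
    x ^ 2 - 2 * M * x + Q ^ 2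
      = (x - (M + √(M ^ 2 - Q ^ 2))) * (x - (M - √(M ^ 2 - Q ^ 2))) := by
  have hsq : √(M ^ 2 - Q ^ 2) ^ 2 = M ^ 2 - Q ^ 2 :=
    Real.sq_sqrt (by nlinarith [sq_abs Q, abs_nonneg Q])
  linear_combination hsq

theorem abs_le_add_sqrt (h : |Q| ≤ M) : |Q| ≤ M + √(M ^ 2 - Q ^ 2) :=
  le_add_of_le_of_nonneg h (Real.sqrt_nonneg _)

theorem add_sqrt_eq_abs_iff (h : |Q| ≤ M) : M + √(M ^ 2 - Q ^ 2) = |Q| ↔ M = |Q| := by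
  constructor
  · intro hR
    linarith [Real.sqrt_nonneg (M ^ 2 - Q ^ 2)]
  · intro hM
    rw [hM, sq_abs, sub_self, Real.sqrt_zero, add_zero]

end Quadratic

section LastZero

variable {f : ℝ → ℝ} {a b : ℝ}

theorem exists_isGreatest_zero_of_eventually_pos (hf : ContinuousOn f (Ici a))
    (hpos : ∀ᶠ x in atTop, 0 < f x) (hne : {x | a ≤ x ∧ f x = 0}.Nonempty) :
    ∃ b, IsGreatest {x | a ≤ x ∧ f x = 0} b := by
  obtain ⟨L, hL⟩ := hpos.exists_forall_of_atTop
  have hsub : {x | a ≤ x ∧ f x = 0} ⊆ Icc a L := fun x ⟨hax, hfx⟩ =>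
    ⟨hax, le_of_not_gt fun hLx => (hL x hLx.le).ne' hfx⟩
  have hclosed : IsClosed {x | a ≤ x ∧ f x = 0} :=
    hf.preimage_isClosed_of_isClosed isClosed_Ici isClosed_singleton
  exact (isCompact_Icc.of_isClosed_subset hclosed hsub).exists_isGreatest hne

theorem pos_of_isGreatest_zero (hf : ContinuousOn f (Ici a)) (hpos : ∀ᶠ x in atTop, 0 < f x)
    (hb : IsGreatest {x | a ≤ x ∧ f x = 0} b) {x : ℝ} (hbx : b < x) : 0 < f x := by
  have hax : a ≤ x := hb.1.1.trans hbx.le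
  by_contra! hfx
  obtain ⟨y, hfy, hxy⟩ := (hpos.and (eventually_ge_atTop x)).exists
  obtain ⟨c, hc, hfc⟩ := intermediate_value_Icc hxy
    (hf.mono fun z hz => hax.trans hz.1) ⟨hfx, hfy.le⟩
  linarith [hb.2 ⟨hax.trans hc.1, hfc⟩, hc.1]

theorem le_apply_of_isGreatest_zero {r : ℝ → ℝ} {R : ℝ} (hr : ContinuousOn r (Ici a))
    (hrlim : Tendsto r atTop atTop) (hR : ∀ x ∈ Ici a, r x = R → f x = 0)
    (hb : IsGreatest {x | a ≤ x ∧ f x = 0} b) : R ≤ r b := by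
  by_contra! hrb
  obtain ⟨y, hry, hby⟩ := ((hrlim.eventually_ge_atTop R).and (eventually_ge_atTop b)).exists
  obtain ⟨c, hc, hrc⟩ := intermediate_value_Icc hby
    (hr.mono fun z hz => hb.1.1.trans hz.1) ⟨hrb.le, hry⟩
  have hac : a ≤ c := hb.1.1.trans hc.1
  have hcb : c = b := le_antisymm (hb.2 ⟨hac, hR c hac hrc⟩) hc.1
  exact hrb.ne (hcb ▸ hrc)

end LastZero

section Electrovacuum

variable {Q : ℝ} {r r' r'' Kr Kr' Kl : ℝ → ℝ}

theorem hasDerivWithinAt_misnerSharp_add_charge {s : Set ℝ} {l : ℝ} (hr : r l ≠ 0)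
    (hr' : HasDerivWithinAt r (r' l) s l) (hr'' : HasDerivWithinAt r' (r'' l) s l)
    (hKr' : HasDerivWithinAt Kr (Kr' l) s l)
    (hham : Kr l * (Kr l + 2 * Kl l)
      - ((r' l) ^ 2 + 2 * r l * r'' l - 1) / (r l) ^ 2 = Q ^ 2 / (r l) ^ 4)
    (hmom : Kr' l + (r' l / r l) * (Kr l - Kl l) = 0) :
    HasDerivWithinAt
      (fun x => r x / 2 * (1 - ((r' x) ^ 2 - (Kr x * r x) ^ 2)) + Q ^ 2 / (2 * r x)) 0 s l := by
  have hderiv := ((hr'.div_const 2).mul ((hasDerivWithinAt_const l s 1).sub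
    ((hr''.pow 2).sub ((hKr'.mul hr').pow 2)))).add
    ((hasDerivWithinAt_const l s (Q ^ 2)).div (hr'.const_mul 2) (mul_ne_zero two_ne_zero hr))
  refine hderiv.congr_deriv ?_
  simp only [Pi.sub_apply, Pi.pow_apply, Pi.mul_apply]
  field_simp at hham hmom
  field_simp
  linear_combination r' l * hham + 2 * Kr l * (r l) ^ 4 * hmom

theorem eq_of_hasDerivWithinAt_zero_of_tendsto {g : ℝ → ℝ} {a c : ℝ}
    (hg : ∀ x ∈ Ici a, HasDerivWithinAt g 0 (Ici a) x) (hlim : Tendsto g atTop (𝓝 c)) :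
    ∀ x ∈ Ici a, g x = c := by
  have hconst : ∀ x ∈ Ici a, g x = g a := fun x hx =>
    constant_of_has_deriv_right_zero (fun y hy => (hg y hy.1).continuousWithinAt.mono
      Icc_subset_Ici_self) (fun y hy => (hg y hy.1).mono (Ici_subset_Ici.2 hy.1)) x ⟨hx, le_rfl⟩
  have hga : g a = c := tendsto_nhds_unique
    (tendsto_const_nhds.congr' (eventually_ge_atTop a |>.mono fun x hx => (hconst x hx).symm)) hlim
  exact fun x hx => (hconst x hx).trans hga

theorem sq_sub_sq_mul_sq_eq_of_constraints {l₀ M : ℝ} (hrpos : ∀ l ∈ Ici l₀, 0 < r l)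
    (hr' : ∀ l ∈ Ici l₀, HasDerivWithinAt r (r' l) (Ici l₀) l)
    (hr'' : ∀ l ∈ Ici l₀, HasDerivWithinAt r' (r'' l) (Ici l₀) l)
    (hKr' : ∀ l ∈ Ici l₀, HasDerivWithinAt Kr (Kr' l) (Ici l₀) l)
    (hham : ∀ l ∈ Ici l₀, Kr l * (Kr l + 2 * Kl l)
      - ((r' l) ^ 2 + 2 * r l * r'' l - 1) / (r l) ^ 2 = Q ^ 2 / (r l) ^ 4)
    (hmom : ∀ l ∈ Ici l₀, Kr' l + (r' l / r l) * (Kr l - Kl l) = 0)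
    (hrlim : Tendsto r atTop atTop)
    (hM : Tendsto (fun l => r l / 2 * (1 - ((r' l) ^ 2 - (Kr l * r l) ^ 2))) atTop (𝓝 M)) :
    ∀ l ∈ Ici l₀,
      ((r' l) ^ 2 - (Kr l * r l) ^ 2) * (r l) ^ 2 = (r l) ^ 2 - 2 * M * r l + Q ^ 2 := by
  have hcharge : Tendsto (fun l => Q ^ 2 / (2 * r l)) atTop (𝓝 0) :=
    tendsto_const_nhds.div_atTop (hrlim.const_mul_atTop two_pos)
  have hconst := eq_of_hasDerivWithinAt_zero_of_tendsto
    (fun l hl => hasDerivWithinAt_misnerSharp_add_charge (hrpos l hl).ne' (hr' l hl) (hr'' l hl)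
      (hKr' l hl) (hham l hl) (hmom l hl)) (add_zero M ▸ hM.add hcharge)
  intro l hl
  have h := hconst l hl
  have hr : r l ≠ 0 := (hrpos l hl).ne'
  field_simp at h
  linear_combination -h

end Electrovacuum

theorem size_charge_inequality_for_horizons_general
    (l₀ : ℝ) (Q : ℝ)
    (r r' r'' Kr Kr' Kl : ℝ → ℝ) (M : ℝ)
    (hrpos : ∀ l ∈ Ici l₀, 0 < r l)
    (hr' : ∀ l ∈ Ici l₀, HasDerivWithinAt r (r' l) (Ici l₀) l)
    (hr'' : ∀ l ∈ Ici l₀, HasDerivWithinAt r' (r'' l) (Ici l₀) l)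
    (hKr' : ∀ l ∈ Ici l₀, HasDerivWithinAt Kr (Kr' l) (Ici l₀) l)
    (hham : ∀ l ∈ Ici l₀, Kr l * (Kr l + 2 * Kl l)
      - ((r' l) ^ 2 + 2 * r l * r'' l - 1) / (r l) ^ 2 = Q ^ 2 / (r l) ^ 4)
    (hmom : ∀ l ∈ Ici l₀, Kr' l + (r' l / r l) * (Kr l - Kl l) = 0)
    (hrlim : Tendsto r atTop atTop)
    (hfcont : ContinuousOn (fun l => (r' l) ^ 2 - (Kr l * r l) ^ 2) (Ici l₀))
    (hM : Tendsto (fun l => r l / 2 * (1 - ((r' l) ^ 2 - (Kr l * r l) ^ 2)))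
      atTop (𝓝 M))
    (hH : {l : ℝ | l₀ ≤ l ∧ (r' l) ^ 2 - (Kr l * r l) ^ 2 = 0}.Nonempty) :
    M ≥ |Q| ∧
    ∃ l₁ : ℝ, IsGreatest {l : ℝ | l₀ ≤ l ∧ (r' l) ^ 2 - (Kr l * r l) ^ 2 = 0} l₁ ∧
      r l₁ = M + Real.sqrt (M ^ 2 - Q ^ 2) ∧
      (∀ l, l₁ < l → 0 < (r' l) ^ 2 - (Kr l * r l) ^ 2) ∧
      |Q| ≤ r l₁ ∧ (r l₁ = |Q| ↔ M = |Q|) := by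
  have hrn := sq_sub_sq_mul_sq_eq_of_constraints hrpos hr' hr'' hKr' hham hmom hrlim hM
  obtain ⟨l, hl, hfl⟩ := hH
  have hMQ : |Q| ≤ M :=
    abs_le_of_sq_sub_two_mul_add_sq_eq_zero (hrpos l hl) (by rw [← hrn l hl, hfl, zero_mul])
  have hroots := sq_sub_two_mul_add_sq_eq_mul hMQ
  have hsqrt := Real.sqrt_nonneg (M ^ 2 - Q ^ 2)
  have hfar : ∀ᶠ l in atTop, 0 < (r' l) ^ 2 - (Kr l * r l) ^ 2 := by
    filter_upwards [hrlim.eventually_gt_atTop (M + √(M ^ 2 - Q ^ 2)), eventually_ge_atTop l₀]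
      with l hRl hl
    refine pos_of_mul_pos_left ?_ (sq_nonneg (r l))
    rw [hrn l hl, hroots]
    exact mul_pos (by linarith) (by linarith)
  obtain ⟨l₁, hl₁⟩ := exists_isGreatest_zero_of_eventually_pos hfcont hfar ⟨l, hl, hfl⟩
  have hRle : M + √(M ^ 2 - Q ^ 2) ≤ r l₁ := by
    refine le_apply_of_isGreatest_zero (fun l hl => (hr' l hl).continuousWithinAt) hrlim
      (fun l hl hrl => ?_) hl₁
    have h : ((r' l) ^ 2 - (Kr l * r l) ^ 2) * (r l) ^ 2 = 0 := by
      rw [hrn l hl, hroots, hrl, sub_self, zero_mul]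
    exact (mul_eq_zero.1 h).resolve_right (pow_ne_zero 2 (hrpos l hl).ne')
  have hrl₁ : r l₁ = M + √(M ^ 2 - Q ^ 2) := by
    have h := hrn l₁ hl₁.1.1
    rw [hl₁.1.2, zero_mul, hroots] at h
    rcases mul_eq_zero.1 h.symm with h | h <;> linarith
  exact ⟨hMQ, l₁, hl₁, hrl₁, fun l => pos_of_isGreatest_zero hfcont hfar hl₁,
    hrl₁ ▸ abs_le_add_sqrt hMQ, hrl₁ ▸ add_sqrt_eq_abs_iff hMQ⟩

/-- Main theorem, part (ii): for an asymptotically flat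
electrovacuum exterior region `[l₀,∞)` with charge `Q ≠ 0` and ADM mass `M`
(the limit at infinity of the Misner–Sharp energy), if the set
`H = {l ≥ l₀ : f(l) = 0}` is nonempty then `M ≥ |Q|`, `H` has a greatest
element `l₁` (the horizon), the horizon radius is
`𝓡₀ = r(l₁) = M + √(M² − Q²)`, `f > 0` beyond the horizon, and
`𝓡₀ ≥ |Q|` with equality iff `M = |Q|`. -/
theorem size_charge_inequality_for_horizons
    (l₀ : ℝ) (hl₀ : 0 < l₀) (Q : ℝ) (hQ : Q ≠ 0)
    (r r' r'' Kr Kr' Kl : ℝ → ℝ) (M : ℝ)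
    (hrpos : ∀ l ∈ Ici l₀, 0 < r l)
    (hr' : ∀ l ∈ Ici l₀, HasDerivWithinAt r (r' l) (Ici l₀) l)
    (hr'' : ∀ l ∈ Ici l₀, HasDerivWithinAt r' (r'' l) (Ici l₀) l)
    (hKr' : ∀ l ∈ Ici l₀, HasDerivWithinAt Kr (Kr' l) (Ici l₀) l)
    (hham : ∀ l ∈ Ici l₀, Kr l * (Kr l + 2 * Kl l)
      - ((r' l) ^ 2 + 2 * r l * r'' l - 1) / (r l) ^ 2 = Q ^ 2 / (r l) ^ 4)
    (hmom : ∀ l ∈ Ici l₀, Kr' l + (r' l / r l) * (Kr l - Kl l) = 0)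
    (hrlim : Tendsto r atTop atTop)
    (hr'lim : Tendsto r' atTop (𝓝 1))
    (hrKrlim : Tendsto (fun l => r l * Kr l) atTop (𝓝 0))
    (hfcont : ContinuousOn (fun l => (r' l) ^ 2 - (Kr l * r l) ^ 2) (Ici l₀))
    (hr'cont : ContinuousOn r' (Ici l₀))
    (hM : Tendsto (fun l => r l / 2 * (1 - ((r' l) ^ 2 - (Kr l * r l) ^ 2)))
      atTop (𝓝 M))
    (hH : {l : ℝ | l₀ ≤ l ∧ (r' l) ^ 2 - (Kr l * r l) ^ 2 = 0}.Nonempty) :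
    M ≥ |Q| ∧
    ∃ l₁ : ℝ, IsGreatest {l : ℝ | l₀ ≤ l ∧ (r' l) ^ 2 - (Kr l * r l) ^ 2 = 0} l₁ ∧
      r l₁ = M + Real.sqrt (M ^ 2 - Q ^ 2) ∧
      (∀ l, l₁ < l → 0 < (r' l) ^ 2 - (Kr l * r l) ^ 2) ∧
      |Q| ≤ r l₁ ∧ (r l₁ = |Q| ↔ M = |Q|) :=
  size_charge_inequality_for_horizons_general l₀ Q r r' r'' Kr Kr' Kl M hrpos hr' hr'' hKr' hham
    hmom hrlim hfcont hM hH
end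

section
/- Let 𝓡 > 0, and let 𝓜, Q, M be real numbers with 0 < 𝓜 ≤ 2𝓡, |Q| > 2𝓡, and M = 𝓜 + (Q² − 𝓜²)/(2𝓡). Then M > |Q|. (Hence a charged thin shell with positive proper mass whose radius violates the inequality 2𝓡 > |Q| is necessarily sub-extremal, M > |Q|, and thus surrounded by a horizon in any asymptotically flat extension.) -/
/-! Writing `q = |Q|`, the excess `M - q` factors as `(q - 𝓜) (q + 𝓜 - 2𝓡) / (2𝓡)`, and
`0 < 𝓜 ≤ 2𝓡 < q` makes both factors positive. -/

theorem add_sq_sub_sq_div_sub_eq (R m q : ℝ) (hR : R ≠ 0) :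
    m + (q ^ 2 - m ^ 2) / (2 * R) - q = (q - m) * (q + m - 2 * R) / (2 * R) := by
  field_simp
  ring

theorem lt_add_sq_sub_sq_div {R m q : ℝ} (hR : 0 < R) (hmq : m < q) (hRq : 2 * R < q + m) :
    q < m + (q ^ 2 - m ^ 2) / (2 * R) := by
  rw [← sub_pos, add_sq_sub_sq_div_sub_eq R m q hR.ne']
  exact div_pos (mul_pos (by linarith) (by linarith)) (by linarith)

/-- a charged thin shell with positive proper mass `0 < 𝓜 ≤ 2𝓡`
whose radius violates the size–charge inequality (`|Q| > 2𝓡`) is necessarily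
sub-extremal: its total mass `M = 𝓜 + (Q² − 𝓜²)/(2𝓡)` satisfies `M > |Q|`. -/
theorem violating_shell_is_subextremal
    (R 𝓜 Q M : ℝ) (hR : 0 < R) (h𝓜pos : 0 < 𝓜) (h𝓜le : 𝓜 ≤ 2 * R)
    (hQ : |Q| > 2 * R) (hM : M = 𝓜 + (Q ^ 2 - 𝓜 ^ 2) / (2 * R)) :
    M > |Q| := by
  rw [hM, ← sq_abs Q]
  exact lt_add_sq_sub_sq_div hR (by linarith) (by linarith)
end

section
/- For every natural number n ≥ 1, define 𝓡ₙ = 1/n, Qₙ = 2/n − 1/n², 𝓜ₙ = 1/(2n³), and Mₙ = 𝓜ₙ + (Qₙ² − 𝓜ₙ²)/(2𝓡ₙ). Then Mₙ = 1/n³ + 2/n − 2/n² − 1/(8n⁵), and Mₙ − Qₙ = (8n² − 8n³ − 1)/(8n⁵) < 0; in particular each member of the sequence is super-extremal, Mₙ < Qₙ, so there are no trapped surfaces in its Reissner–Nordström exterior region. -/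
namespace ThinShell

theorem sequence_adm_mass_eq (x : ℝ) (hx : x ≠ 0) :
    1 / (2 * x ^ 3) + ((2 / x - 1 / x ^ 2) ^ 2 - (1 / (2 * x ^ 3)) ^ 2) / (2 * (1 / x)) =
      1 / x ^ 3 + 2 / x - 2 / x ^ 2 - 1 / (8 * x ^ 5) := by
  field_simp
  ring

theorem sequence_adm_mass_sub_charge_eq (x : ℝ) (hx : x ≠ 0) :
    1 / x ^ 3 + 2 / x - 2 / x ^ 2 - 1 / (8 * x ^ 5) - (2 / x - 1 / x ^ 2) =
      (8 * x ^ 2 - 8 * x ^ 3 - 1) / (8 * x ^ 5) := by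
  field_simp
  ring

theorem eight_sq_sub_eight_cube_sub_one_neg {x : ℝ} (hx : 1 ≤ x) :
    8 * x ^ 2 - 8 * x ^ 3 - 1 < 0 := by
  have : 0 ≤ x ^ 2 * (x - 1) := mul_nonneg (sq_nonneg x) (sub_nonneg.2 hx)
  nlinarith

end ThinShell

open ThinShell in
/-- for the sequence of thin shells with `𝓡ₙ = 1/n`,
`Qₙ = 2/n − 1/n²`, `𝓜ₙ = 1/(2n³)` and `Mₙ = 𝓜ₙ + (Qₙ² − 𝓜ₙ²)/(2𝓡ₙ)`, one has
`Mₙ = 1/n³ + 2/n − 2/n² − 1/(8n⁵)` and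
`Mₙ − Qₙ = (8n² − 8n³ − 1)/(8n⁵) < 0`; in particular each member is
super-extremal, `Mₙ < Qₙ`. -/
theorem thin_shell_sequence_superextremal
    (n : ℕ) (hn : 1 ≤ n) (Rn Qn 𝓜n Mn : ℝ)
    (hR : Rn = 1 / n) (hQ : Qn = 2 / n - 1 / (n : ℝ) ^ 2)
    (h𝓜 : 𝓜n = 1 / (2 * (n : ℝ) ^ 3))
    (hM : Mn = 𝓜n + (Qn ^ 2 - 𝓜n ^ 2) / (2 * Rn)) :
    Mn = 1 / (n : ℝ) ^ 3 + 2 / n - 2 / (n : ℝ) ^ 2 - 1 / (8 * (n : ℝ) ^ 5) ∧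
    Mn - Qn = (8 * (n : ℝ) ^ 2 - 8 * (n : ℝ) ^ 3 - 1) / (8 * (n : ℝ) ^ 5) ∧
    Mn - Qn < 0 ∧ Mn < Qn := by
  have hn_one : (1 : ℝ) ≤ n := Nat.one_le_cast.2 hn
  have hn_ne : (n : ℝ) ≠ 0 := by positivity
  have hMn : Mn = 1 / (n : ℝ) ^ 3 + 2 / n - 2 / (n : ℝ) ^ 2 - 1 / (8 * (n : ℝ) ^ 5) := by
    rw [hM, hR, hQ, h𝓜, sequence_adm_mass_eq _ hn_ne]
  have hexcess : Mn - Qn = (8 * (n : ℝ) ^ 2 - 8 * (n : ℝ) ^ 3 - 1) / (8 * (n : ℝ) ^ 5) := by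
    rw [hMn, hQ, sequence_adm_mass_sub_charge_eq _ hn_ne]
  have hneg : Mn - Qn < 0 := by
    rw [hexcess]
    exact div_neg_of_neg_of_pos (eight_sq_sub_eight_cube_sub_one_neg hn_one) (by positivity)
  exact ⟨hMn, hexcess, hneg, sub_neg.1 hneg⟩
end
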